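/- arXiv:2107.01270 — 2 statements merged into one kernel-verified Lean document; each statement's English description precedes it below -/
import Mathlib

section
/- Let K be a number field with ring of integers A, let n be a positive integer, and suppose that for some set S of residue classes generating the unit group (ℤ/nℤ)ˣ, every class in S contains a rational prime p that is semi-split in K (i.e., there is a maximal ideal 𝔪 of A over p with residue field A/𝔪 ≅ 𝔽_p). Then the n-th cyclotomic polynomial Φₙ(X) is irreducible over K. -/
/-!
A semi-split prime `p` gives a ring homomorphism `𝓞_K → 𝔽_p`, and this is all that Dedekind's
argument for the irreducibility of `Φₙ` over `ℚ` needs. If a primitive `n`-th root of unity `ζ`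
and `ζ ^ p` (with `p ∤ n`) had distinct minimal polynomials `P` and `Q` over `𝓞_K`, then
`P * Q ∣ Xⁿ - 1` and `P ∣ Q(X ^ p)`; modulo the kernel the latter becomes `P̄ ∣ Q̄ ^ p`, so `P̄²`
divides `Xⁿ - 1`, which is separable over `𝔽_p`. Hence `ζ ↦ ζ ^ p` extends to an automorphism
of `K(ζ)`, so the image of `Gal(K(ζ)/K)` in `(ℤ/nℤ)ˣ` contains the generating set `S` and is
everything. Then every primitive `n`-th root of unity is conjugate to `ζ`, and the minimal
polynomial of `ζ`, a factor of `Φₙ`, has degree at least `φ(n)`.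
-/

/-- A rational prime `p` is semi-split in the number field `K` if some maximal ideal of
the ring of integers of `K` lying over `p` has residue field `𝔽_p`, i.e. of cardinality `p`. -/
def IsSemiSplit (K : Type*) [Field K] [NumberField K] (p : ℕ) : Prop :=
  ∃ 𝔪 : Ideal (NumberField.RingOfIntegers K), 𝔪.IsMaximal ∧
    (p : NumberField.RingOfIntegers K) ∈ 𝔪 ∧ Ideal.absNorm 𝔪 = p

open Polynomial NumberField

theorem minpoly_mul_minpoly_dvd_of_ne {K L : Type*} [Field K] [CommRing L] [IsDomain L]
    [Algebra K L] {x y : L} (hx : IsIntegral K x) (hy : IsIntegral K y)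
    (hne : minpoly K x ≠ minpoly K y) {f : K[X]} (hfx : aeval x f = 0) (hfy : aeval y f = 0) :
    minpoly K x * minpoly K y ∣ f := by
  have hcop : IsCoprime (minpoly K x) (minpoly K y) := by
    rw [(minpoly.irreducible hx).coprime_iff_not_dvd]
    exact fun hdvd ↦ hne <| eq_of_monic_of_associated (minpoly.monic hx) (minpoly.monic hy)
      ((minpoly.irreducible hx).associated_of_dvd (minpoly.irreducible hy) hdvd)
  exact hcop.mul_dvd (minpoly.dvd K x hfx) (minpoly.dvd K y hfy)

theorem minpoly_dvd_expand_minpoly_pow {A S : Type*} [CommRing A] [IsDomain A]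
    [IsIntegrallyClosed A] [CommRing S] [IsDomain S] [Algebra A S] [Module.IsTorsionFree A S]
    {x : S} (hx : IsIntegral A x) (p : ℕ) : minpoly A x ∣ expand A p (minpoly A (x ^ p)) := by
  refine minpoly.isIntegrallyClosed_dvd hx ?_
  rw [aeval_def, coe_expand, ← comp, eval₂_eq_eval_map, map_comp, Polynomial.map_pow, map_X,
    eval_comp, eval_X_pow, ← eval₂_eq_eval_map, ← aeval_def]
  exact minpoly.aeval _ _

/-- Modulo `p`, `expand p Q` becomes `Q ^ p`, so `P` reappears as a repeated factor of `f`. -/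
theorem isUnit_map_of_mul_dvd_of_dvd_expand {A : Type*} [CommRing A] {p : ℕ} [Fact p.Prime]
    (φ : A →+* ZMod p) {P Q f : A[X]} (hPQ : P * Q ∣ f) (hexp : P ∣ expand A p Q)
    (hf : Squarefree (f.map φ)) : IsUnit (P.map φ) := by
  have hPQf : P.map φ * Q.map φ ∣ f.map φ := by
    simpa only [Polynomial.map_mul] using Polynomial.map_dvd φ hPQ
  have hPQp : P.map φ ∣ Q.map φ ^ p := by
    simpa only [map_expand, ZMod.expand_card] using Polynomial.map_dvd φ hexp
  have hPQ' : P.map φ ∣ Q.map φ :=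
    (hf.squarefree_of_dvd (dvd_of_mul_right_dvd hPQf)).isRadical p _ hPQp
  exact hf _ ((mul_dvd_mul_left _ hPQ').trans hPQf)

theorem IsPrimitiveRoot.minpoly_eq_pow_of_ringHom {A K L : Type*} [CommRing A] [IsDomain A]
    [IsIntegrallyClosed A] [Field K] [Algebra A K] [IsFractionRing A K] [Field L] [Algebra A L]
    [Algebra K L] [IsScalarTower A K L] {n p : ℕ} [Fact p.Prime] (φ : A →+* ZMod p)
    (hdiv : ¬p ∣ n) {μ : L} (hμ : IsPrimitiveRoot μ n) : minpoly K μ = minpoly K (μ ^ p) := by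
  have hn : n ≠ 0 := by rintro rfl; exact hdiv (dvd_zero p)
  have hint : IsIntegral A μ := (hμ.isIntegral (Nat.pos_of_ne_zero hn)).tower_top
  have hintp : IsIntegral A (μ ^ p) := hint.pow p
  have : Module.IsTorsionFree A L := .trans_faithfulSMul A K L
  by_contra hne
  have hPQ : minpoly A μ * minpoly A (μ ^ p) ∣ X ^ n - 1 := by
    rw [← map_dvd_map (algebraMap A K) (IsFractionRing.injective A K)
      ((minpoly.monic hint).mul (minpoly.monic hintp)), Polynomial.map_mul,
      ← minpoly.isIntegrallyClosed_eq_field_fractions' K hint,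
      ← minpoly.isIntegrallyClosed_eq_field_fractions' K hintp]
    simpa using minpoly_mul_minpoly_dvd_of_ne hint.tower_top hintp.tower_top hne
      (f := X ^ n - 1) (by simp [hμ.pow_eq_one]) (by simp [pow_right_comm μ p n, hμ.pow_eq_one])
  have hsq : Squarefree ((X ^ n - 1 : A[X]).map φ) := by
    rw [Polynomial.map_sub, Polynomial.map_pow, map_X, Polynomial.map_one, ← C_1]
    refine (separable_X_pow_sub_C 1 ?_ one_ne_zero).squarefree
    exact fun h ↦ hdiv ((ZMod.natCast_eq_zero_iff n p).1 h)
  have hunit := isUnit_map_of_mul_dvd_of_dvd_expand φ hPQ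
    (minpoly_dvd_expand_minpoly_pow hint p) hsq
  rw [((minpoly.monic hint).map φ).isUnit_iff] at hunit
  have hdeg := congrArg natDegree hunit
  rw [(minpoly.monic hint).natDegree_map, natDegree_one] at hdeg
  exact (minpoly.natDegree_pos hint).ne' hdeg

theorem IsPrimitiveRoot.mem_range_autToPow {K L : Type*} [Field K] [Field L] [Algebra K L]
    [Normal K L] {n : ℕ} [NeZero n] {ζ : L} (hζ : IsPrimitiveRoot ζ n) {m : ℕ}
    (h : minpoly K ζ = minpoly K (ζ ^ m)) (u : (ZMod n)ˣ) (hu : (m : ZMod n) = u) :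
    u ∈ (hζ.autToPow K).range := by
  obtain ⟨σ, hσ⟩ := (Normal.minpoly_eq_iff_mem_orbit L).mp h.symm
  refine ⟨σ, Units.ext ?_⟩
  rw [← hu, ← ZMod.natCast_zmod_val (hζ.autToPow K σ : ZMod n), ZMod.natCast_eq_natCast_iff]
  have hpow : ζ ^ (hζ.autToPow K σ : ZMod n).val = ζ ^ m := (hζ.autToPow_spec K σ).trans hσ
  rwa [(hζ.isOfFinOrder (NeZero.ne n)).pow_eq_pow_iff_modEq, ← hζ.eq_orderOf] at hpow

theorem IsPrimitiveRoot.totient_le_natDegree {K L : Type*} [Field K] [CommRing L] [IsDomain L]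
    [Algebra K L] {n : ℕ} {ζ : L} (hζ : IsPrimitiveRoot ζ n) {f : K[X]} (hf : f ≠ 0)
    (hroots : ∀ x ∈ primitiveRoots n L, aeval x f = 0) : n.totient ≤ f.natDegree :=
  calc n.totient = (primitiveRoots n L).card := hζ.card_primitiveRoots.symm
    _ ≤ (f.map (algebraMap K L)).natDegree :=
      card_le_degree_of_subset_roots fun x hx ↦ mem_aroots.2 ⟨hf, hroots x hx⟩
    _ = f.natDegree := natDegree_map _

theorem IsPrimitiveRoot.irreducible_cyclotomic_of_surjective_autToPow {K L : Type*} [Field K]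
    [Field L] [Algebra K L] {n : ℕ} [NeZero n] {ζ : L} (hζ : IsPrimitiveRoot ζ n)
    (hsurj : Function.Surjective (hζ.autToPow K)) : Irreducible (cyclotomic n K) := by
  have hint : IsIntegral K ζ := (hζ.isIntegral (NeZero.pos n)).tower_top
  have hroots : ∀ x ∈ primitiveRoots n L, aeval x (minpoly K ζ) = 0 := by
    intro x hx
    obtain ⟨i, hin, hi, rfl⟩ := hζ.isPrimitiveRoot_iff.1 ((mem_primitiveRoots (NeZero.pos n)).1 hx)
    obtain ⟨σ, hσ⟩ := hsurj (ZMod.unitOfCoprime i hi)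
    have hσζ : σ ζ = ζ ^ i := by
      rw [← hζ.autToPow_spec K σ, hσ, ZMod.coe_unitOfCoprime, ZMod.val_natCast,
        Nat.mod_eq_of_lt hin]
    rw [← hσζ, ← minpoly.algEquiv_eq σ ζ]
    exact minpoly.aeval K _
  have hcyc : cyclotomic n K = minpoly K ζ := by
    refine eq_of_monic_of_dvd_of_natDegree_le (minpoly.monic hint) (cyclotomic.monic n K)
      (minpoly.dvd K ζ ?_) ?_
    · rw [aeval_def, ← eval_map, map_cyclotomic]
      exact hζ.isRoot_cyclotomic (NeZero.pos n)
    · rw [natDegree_cyclotomic]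
      exact hζ.totient_le_natDegree (minpoly.ne_zero hint) hroots
  rw [hcyc]
  exact minpoly.irreducible hint

theorem Ideal.nonempty_ringHom_zmod_of_card_quotient {R : Type*} [CommRing R] (I : Ideal R)
    {p : ℕ} (hp : p.Prime) (h : Nat.card (R ⧸ I) = p) : Nonempty (R →+* ZMod p) := by
  have : Finite (R ⧸ I) := Nat.finite_of_card_ne_zero (h ▸ hp.ne_zero)
  let := Fintype.ofFinite (R ⧸ I)
  exact ⟨(ZMod.ringEquivOfPrime _ hp (Fintype.card_eq_nat_card.trans h)).symm.toRingHom.comp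
    (Ideal.Quotient.mk I)⟩

theorem IsSemiSplit.nonempty_ringHom_zmod {K : Type*} [Field K] [NumberField K] {p : ℕ}
    (hp : p.Prime) (h : IsSemiSplit K p) : Nonempty (𝓞 K →+* ZMod p) := by
  obtain ⟨𝔪, -, -, hnorm⟩ := h
  exact 𝔪.nonempty_ringHom_zmod_of_card_quotient hp (by rwa [← Submodule.cardQuot_apply])

/-- If every residue class in some generating set of `(ℤ/nℤ)ˣ` contains a rational prime
semi-split in the number field `K`, then the `n`-th cyclotomic polynomial is irreducible
over `K`. -/
theorem stmt_3 (K : Type*) [Field K] [NumberField K] (n : ℕ) (hn : 0 < n)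
    (S : Set (ZMod n)ˣ) (hS : Subgroup.closure S = ⊤)
    (hsemi : ∀ a ∈ S, ∃ p : ℕ, p.Prime ∧ IsSemiSplit K p ∧ (p : ZMod n) = (a : ZMod n)) :
    Irreducible (Polynomial.cyclotomic n K) := by
  have : NeZero n := ⟨hn.ne'⟩
  let L := CyclotomicField n K
  have : Normal K L := (IsCyclotomicExtension.isGalois {n} K L).to_normal
  have hζ := IsCyclotomicExtension.zeta_spec n K L
  refine hζ.irreducible_cyclotomic_of_surjective_autToPow (MonoidHom.range_eq_top.1 ?_)
  rw [eq_top_iff, ← hS, Subgroup.closure_le]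
  intro a ha
  obtain ⟨p, hp, hsplit, hpa⟩ := hsemi a ha
  have : Fact p.Prime := ⟨hp⟩
  obtain ⟨φ⟩ := hsplit.nonempty_ringHom_zmod hp
  have hdiv : ¬p ∣ n :=
    hp.coprime_iff_not_dvd.1 <| (ZMod.isUnit_iff_coprime p n).1 (hpa ▸ a.isUnit)
  exact hζ.mem_range_autToPow (hζ.minpoly_eq_pow_of_ringHom (A := 𝓞 K) φ hdiv) a hpa
end

section
/- Let K be a number field such that all but finitely many rational primes are semi-split in K. Then for every positive integer n, the n-th cyclotomic polynomial Φₙ(X) is irreducible over K. -/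
open Polynomial NumberField

namespace minpoly

variable {R S : Type*} [CommRing R] [IsDomain R] [IsIntegrallyClosed R] [CommRing S] [IsDomain S]
  [Algebra R S] [Module.IsTorsionFree R S] {x y : S}

theorem dvd_expand_minpoly_pow (hx : IsIntegral R x) (p : ℕ) :
    minpoly R x ∣ expand R p (minpoly R (x ^ p)) :=
  isIntegrallyClosed_dvd hx (by rw [expand_aeval, aeval])

theorem mul_dvd_of_ne (hx : IsIntegral R x) (hy : IsIntegral R y)
    (hne : minpoly R x ≠ minpoly R y) {f : R[X]} (hfx : Polynomial.aeval x f = 0)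
    (hfy : Polynomial.aeval y f = 0) : minpoly R x * minpoly R y ∣ f := by
  obtain ⟨g, rfl⟩ := isIntegrallyClosed_dvd hx hfx
  have hxy : Polynomial.aeval y (minpoly R x) ≠ 0 := fun hyx ↦ hne <| by
    have := (irreducible hy).associated_of_dvd (irreducible hx) (isIntegrallyClosed_dvd hy hyx)
    exact eq_of_monic_of_associated (monic hx) (monic hy) this.symm
  rw [map_mul, mul_eq_zero] at hfy
  exact mul_dvd_mul_left _ (isIntegrallyClosed_dvd hy (hfy.resolve_left hxy))

end minpoly

theorem ZMod.separable_X_pow_sub_one {p n : ℕ} [Fact p.Prime] (hdiv : ¬ p ∣ n) :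
    Separable (X ^ n - 1 : (ZMod p)[X]) := by
  simpa using separable_X_pow_sub_C (1 : ZMod p) (by rwa [Ne, ZMod.natCast_eq_zero_iff]) one_ne_zero

namespace IsPrimitiveRoot

variable {R L : Type*} [CommRing R] [IsDomain R] [IsIntegrallyClosed R] [Field L] [Algebra R L]
  [Module.IsTorsionFree R L] {n p : ℕ} [Fact p.Prime] {μ : L}

theorem map_minpoly_dvd_map_minpoly_pow (h : IsPrimitiveRoot μ n) (hμ : IsIntegral R μ)
    (φ : R →+* ZMod p) (hdiv : ¬ p ∣ n) :
    (minpoly R μ).map φ ∣ (minpoly R (μ ^ p)).map φ := by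
  have hdvd : minpoly R μ ∣ X ^ n - 1 := minpoly.isIntegrallyClosed_dvd hμ (by simp [h.pow_eq_one])
  have hsqfree : Squarefree ((minpoly R μ).map φ) :=
    (ZMod.separable_X_pow_sub_one hdiv).squarefree.squarefree_of_dvd <| by
      simpa using Polynomial.map_dvd φ hdvd
  refine hsqfree.isRadical p _ ?_
  rw [← ZMod.expand_card, ← map_expand]
  exact Polynomial.map_dvd φ (minpoly.dvd_expand_minpoly_pow hμ p)

theorem minpoly_eq_pow_of_ringHom_zmod (h : IsPrimitiveRoot μ n) (φ : R →+* ZMod p)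
    (hdiv : ¬ p ∣ n) : minpoly R μ = minpoly R (μ ^ p) := by
  have hn : 0 < n := Nat.pos_of_ne_zero (by rintro rfl; exact hdiv (dvd_zero p))
  have hμ : IsIntegral R μ := (h.isIntegral hn).tower_top
  by_contra hne
  have hprod := minpoly.mul_dvd_of_ne hμ (hμ.pow p) hne (f := X ^ n - 1)
    (by simp [h.pow_eq_one]) (by simp [(h.pow_of_prime Fact.out hdiv).pow_eq_one])
  have hsq : (minpoly R μ).map φ * (minpoly R μ).map φ ∣ X ^ n - 1 := by
    refine (mul_dvd_mul_left _ (h.map_minpoly_dvd_map_minpoly_pow hμ φ hdiv)).trans ?_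
    simpa using Polynomial.map_dvd φ hprod
  have hdeg := natDegree_eq_zero_of_isUnit ((ZMod.separable_X_pow_sub_one hdiv).squarefree _ hsq)
  rw [(minpoly.monic hμ).natDegree_map] at hdeg
  exact (minpoly.natDegree_pos hμ).ne' hdeg

theorem minpoly_eq_pow_of_ringHom_zmod' {K : Type*} [Field K] [Algebra R K] [IsFractionRing R K]
    [Algebra K L] [IsScalarTower R K L] (h : IsPrimitiveRoot μ n) (φ : R →+* ZMod p)
    (hdiv : ¬ p ∣ n) : minpoly K μ = minpoly K (μ ^ p) := by
  have hμ : IsIntegral R μ :=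
    (h.isIntegral (Nat.pos_of_ne_zero (by rintro rfl; exact hdiv (dvd_zero p)))).tower_top
  rw [minpoly.isIntegrallyClosed_eq_field_fractions' K hμ,
    minpoly.isIntegrallyClosed_eq_field_fractions' K (hμ.pow p),
    h.minpoly_eq_pow_of_ringHom_zmod φ hdiv]

end IsPrimitiveRoot

theorem Polynomial.cyclotomic_irreducible_of_minpoly_pow_eq {K L : Type*} [Field K] [Field L]
    [Algebra K L] {n : ℕ} [NeZero n] {ζ : L} (hζ : IsPrimitiveRoot ζ n)
    (h : ∀ m, m.Coprime n → minpoly K (ζ ^ m) = minpoly K ζ) :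
    Irreducible (cyclotomic n K) := by
  classical
  have hζint : IsIntegral K ζ := (hζ.isIntegral (NeZero.pos n)).tower_top
  set P := (minpoly K ζ).map (algebraMap K L)
  have hroots : primitiveRoots n L ⊆ P.roots.toFinset := by
    intro x hx
    obtain ⟨m, -, hm, rfl⟩ := hζ.isPrimitiveRoot_iff.1 ((mem_primitiveRoots (NeZero.pos n)).1 hx)
    rw [Multiset.mem_toFinset, mem_roots (map_monic_ne_zero (minpoly.monic hζint)), IsRoot,
      eval_map_algebraMap, ← h m hm, minpoly.aeval]
  have hdeg : (cyclotomic n K).natDegree ≤ (minpoly K ζ).natDegree := calc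
    (cyclotomic n K).natDegree = (primitiveRoots n L).card := by
      rw [natDegree_cyclotomic, hζ.card_primitiveRoots]
    _ ≤ P.roots.toFinset.card := Finset.card_le_card hroots
    _ ≤ Multiset.card P.roots := Multiset.toFinset_card_le _
    _ ≤ P.natDegree := card_roots' _
    _ ≤ (minpoly K ζ).natDegree := natDegree_map_le
  have hdvd : minpoly K ζ ∣ cyclotomic n K := minpoly.dvd K ζ <| by
    rw [aeval_def, eval₂_eq_eval_map, map_cyclotomic]
    exact hζ.isRoot_cyclotomic (NeZero.pos n)
  rw [eq_of_monic_of_dvd_of_natDegree_le (minpoly.monic hζint) (cyclotomic.monic n K) hdvd hdeg]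
  exact minpoly.irreducible hζint

theorem Nat.exists_prime_eq_mod_of_finite_exceptions {P : ℕ → Prop}
    (hP : {p | p.Prime ∧ ¬ P p}.Finite) {q : ℕ} [NeZero q] {a : ZMod q} (ha : IsUnit a) :
    ∃ p, p.Prime ∧ P p ∧ (p : ZMod q) = a := by
  obtain ⟨p, ⟨hp, hpa⟩, hpP⟩ := ((Nat.infinite_setOfPred_prime_and_eq_mod ha).sdiff hP).nonempty
  exact ⟨p, hp, by simpa [hp] using hpP, hpa⟩

/-- If all but finitely many rational primes are semi-split in the number field `K`, then
every cyclotomic polynomial is irreducible over `K`. -/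
theorem stmt_7 (K : Type*) [Field K] [NumberField K]
    (h : {p : ℕ | p.Prime ∧ ¬ IsSemiSplit K p}.Finite) :
    ∀ n : ℕ, 0 < n → Irreducible (Polynomial.cyclotomic n K) := by
  intro n hn
  have : NeZero n := ⟨hn.ne'⟩
  obtain ⟨ζ, hζ⟩ : ∃ ζ : CyclotomicField n K, IsPrimitiveRoot ζ n :=
    ⟨_, IsCyclotomicExtension.zeta_spec n K _⟩
  refine cyclotomic_irreducible_of_minpoly_pow_eq hζ fun m hm ↦ ?_
  have hmunit : IsUnit (m : ZMod n) := (ZMod.isUnit_iff_coprime m n).2 hm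
  obtain ⟨p, hp, hsplit, hpm⟩ := Nat.exists_prime_eq_mod_of_finite_exceptions h hmunit
  have : Fact p.Prime := ⟨hp⟩
  obtain ⟨φ⟩ := hsplit.nonempty_ringHom_zmod hp
  have hdiv : ¬ p ∣ n := hp.coprime_iff_not_dvd.1 ((ZMod.isUnit_iff_coprime p n).1 (hpm ▸ hmunit))
  have hpow : ζ ^ m = ζ ^ p := by
    rw [(hζ.isOfFinOrder hn.ne').pow_eq_pow_iff_modEq, ← hζ.eq_orderOf]
    exact ((ZMod.natCast_eq_natCast_iff p m n).1 hpm).symm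
  rw [hpow]
  exact (hζ.minpoly_eq_pow_of_ringHom_zmod' φ hdiv).symm
end
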